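/- Let ρ be a density matrix on ℂ^{d_A} ⊗ ℂ^{d_B} (a matrix indexed by pairs of indices), and let E_A be a CPTP map on the d_A×d_A complex matrices such that (E_A ⊗ Id)(ρ) = ρ, where E_A ⊗ Id acts as E_A on the first tensor factor and trivially on the second. Then E_A(X) = X for every X in the operator Schmidt span Σ_A(ρ), and consequently (E_A ⊗ Id)(Z) = Z for every Z ∈ Σ_A(ρ) ⊗ M_{d_B}. -/

import Mathlib

open Matrix
open scoped ComplexOrder Kronecker

/-- The subspace `W ⊗ M_{d_B}` of matrices on `ℂ^{d_A} ⊗ ℂ^{d_B}`: the span of Kronecker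
products `A ⊗ₖ B` with `A ∈ W`. -/
noncomputable def tensorExt {dA dB : ℕ} (W : Submodule ℂ (Matrix (Fin dA) (Fin dA) ℂ)) :
    Submodule ℂ (Matrix (Fin dA × Fin dB) (Fin dA × Fin dB) ℂ) :=
  Submodule.span ℂ {Z | ∃ A ∈ W, ∃ B : Matrix (Fin dB) (Fin dB) ℂ, Z = A ⊗ₖ B}

/-- The operator Schmidt span `Σ_A(ρ)` of a matrix on `ℂ^{d_A} ⊗ ℂ^{d_B}`: the smallest
subspace `W` of `M_{d_A}` with `ρ ∈ W ⊗ M_{d_B}`. -/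
noncomputable def opSchmidtSpan {dA dB : ℕ}
    (ρ : Matrix (Fin dA × Fin dB) (Fin dA × Fin dB) ℂ) :
    Submodule ℂ (Matrix (Fin dA) (Fin dA) ℂ) :=
  sInf {W | ρ ∈ tensorExt (dB := dB) W}

/-!
The `(j, l)` block `ρ.submatrix (·, j) (·, l)` of `(E_A ⊗ Id)(ρ)` is `E_A` applied to the
`(j, l)` block of `ρ`, so invariance of `ρ` makes `E_A` fix every block. Expanding
`ρ = ∑ j l, ρ_{jl} ⊗ₖ E_{jl}` shows that the blocks span a subspace `W` with
`ρ ∈ W ⊗ M_{d_B}`, hence `Σ_A(ρ) ≤ W` is fixed by `E_A`; and `E_A ⊗ Id` fixes `A ⊗ₖ B`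
whenever `E_A` fixes `A`.
-/

namespace Matrix

theorem eq_sum_submatrix_kronecker_single {R n p : Type*} [Semiring R] [Fintype p]
    [DecidableEq p] (Z : Matrix (n × p) (n × p) R) :
    Z = ∑ j, ∑ l, Z.submatrix (·, j) (·, l) ⊗ₖ single j l 1 := by
  ext ⟨i, j⟩ ⟨i', l⟩
  simp only [sum_apply, kronecker_apply, submatrix_apply, single_apply]
  rw [Finset.sum_eq_single j, Finset.sum_eq_single l] <;> simp +contextual [eq_comm]

section Kraus

variable {R n p ι : Type*} [CommSemiring R] [StarRing R] [Fintype n] [DecidableEq n]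
  [Fintype p] [DecidableEq p] [Fintype ι]

variable (R) in
def krausMap (N : ι → Matrix n n R) : Matrix n n R →ₗ[R] Matrix n n R where
  toFun X := ∑ k, N k * X * (N k)ᴴ
  map_add' X Y := by simp only [mul_add, add_mul, Finset.sum_add_distrib]
  map_smul' c X := by simp [Finset.smul_sum]

theorem krausMap_apply (N : ι → Matrix n n R) (X : Matrix n n R) :
    krausMap R N X = ∑ k, N k * X * (N k)ᴴ := rfl

theorem submatrix_krausMap_kronecker_one (N : ι → Matrix n n R) (Z : Matrix (n × p) (n × p) R)
    (j l : p) :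
    (krausMap R (fun k => N k ⊗ₖ (1 : Matrix p p R)) Z).submatrix (·, j) (·, l) =
      krausMap R N (Z.submatrix (·, j) (·, l)) := by
  ext i i'
  simp [krausMap_apply, sum_apply, mul_apply, conjTranspose_kronecker,
    one_apply, Fintype.sum_prod_type]

theorem krausMap_kronecker_one_kronecker (N : ι → Matrix n n R) (A : Matrix n n R)
    (B : Matrix p p R) :
    krausMap R (fun k => N k ⊗ₖ (1 : Matrix p p R)) (A ⊗ₖ B) = krausMap R N A ⊗ₖ B := by
  simp only [krausMap_apply, conjTranspose_kronecker, conjTranspose_one, ← mul_kronecker_mul,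
    one_mul, mul_one]
  ext
  simp [sum_apply, Finset.sum_mul]

theorem span_submatrix_le_eqLocus_krausMap {N : ι → Matrix n n R} {Z : Matrix (n × p) (n × p) R}
    (hZ : krausMap R (fun k => N k ⊗ₖ (1 : Matrix p p R)) Z = Z) :
    Submodule.span R (Set.range fun jl : p × p => Z.submatrix (·, jl.1) (·, jl.2)) ≤
      LinearMap.eqLocus (krausMap R N) LinearMap.id := by
  refine Submodule.span_le.2 ?_
  rintro _ ⟨⟨j, l⟩, rfl⟩
  change krausMap R N (Z.submatrix (·, j) (·, l)) = Z.submatrix (·, j) (·, l)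
  rw [← submatrix_krausMap_kronecker_one, hZ]

end Kraus

end Matrix

section SchmidtSpan

variable {dA dB : ℕ}

theorem mem_tensorExt_of_submatrix_mem {W : Submodule ℂ (Matrix (Fin dA) (Fin dA) ℂ)}
    {Z : Matrix (Fin dA × Fin dB) (Fin dA × Fin dB) ℂ}
    (hZ : ∀ j l, Z.submatrix (·, j) (·, l) ∈ W) : Z ∈ tensorExt W := by
  rw [Z.eq_sum_submatrix_kronecker_single]
  exact Submodule.sum_mem _ fun j _ => Submodule.sum_mem _ fun l _ =>
    Submodule.subset_span ⟨_, hZ j l, _, rfl⟩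

theorem opSchmidtSpan_le_span_submatrix (ρ : Matrix (Fin dA × Fin dB) (Fin dA × Fin dB) ℂ) :
    opSchmidtSpan ρ ≤
      Submodule.span ℂ (Set.range fun jl : Fin dB × Fin dB => ρ.submatrix (·, jl.1) (·, jl.2)) :=
  sInf_le <| mem_tensorExt_of_submatrix_mem fun j l => Submodule.subset_span ⟨(j, l), rfl⟩

theorem tensorExt_le_eqLocus_krausMap_kronecker_one {ι : Type*} [Fintype ι]
    {W : Submodule ℂ (Matrix (Fin dA) (Fin dA) ℂ)} {N : ι → Matrix (Fin dA) (Fin dA) ℂ}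
    (hW : W ≤ LinearMap.eqLocus (krausMap ℂ N) LinearMap.id) :
    tensorExt (dB := dB) W ≤
      LinearMap.eqLocus (krausMap ℂ fun k => N k ⊗ₖ (1 : Matrix (Fin dB) (Fin dB) ℂ))
        LinearMap.id := by
  refine Submodule.span_le.2 ?_
  rintro _ ⟨A, hA, B, rfl⟩
  change krausMap ℂ _ (A ⊗ₖ B) = A ⊗ₖ B
  rw [krausMap_kronecker_one_kronecker, LinearMap.mem_eqLocus.1 (hW hA), LinearMap.id_apply]

end SchmidtSpan

theorem invariance_of_operator_schmidt_span_general {dA dB m : ℕ}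
    (ρ : Matrix (Fin dA × Fin dB) (Fin dA × Fin dB) ℂ)
    (EA : Matrix (Fin dA) (Fin dA) ℂ → Matrix (Fin dA) (Fin dA) ℂ)
    (M : Fin m → Matrix (Fin dA) (Fin dA) ℂ)
    (hKraus : ∀ X, EA X = ∑ k, M k * X * (M k)ᴴ)
    (hinv : (∑ k, (M k ⊗ₖ (1 : Matrix (Fin dB) (Fin dB) ℂ)) * ρ *
        (M k ⊗ₖ (1 : Matrix (Fin dB) (Fin dB) ℂ))ᴴ) = ρ) :
    (∀ X ∈ opSchmidtSpan ρ, EA X = X) ∧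
    (∀ Z ∈ tensorExt (dB := dB) (opSchmidtSpan ρ),
      (∑ k, (M k ⊗ₖ (1 : Matrix (Fin dB) (Fin dB) ℂ)) * Z *
        (M k ⊗ₖ (1 : Matrix (Fin dB) (Fin dB) ℂ))ᴴ) = Z) := by
  have hfix : opSchmidtSpan ρ ≤ LinearMap.eqLocus (krausMap ℂ M) LinearMap.id :=
    (opSchmidtSpan_le_span_submatrix ρ).trans (span_submatrix_le_eqLocus_krausMap hinv)
  exact ⟨fun X hX => (hKraus X).trans (hfix hX),
    fun Z hZ => tensorExt_le_eqLocus_krausMap_kronecker_one hfix hZ⟩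

/-- If a density matrix `ρ` on `ℂ^{d_A} ⊗ ℂ^{d_B}` is invariant under `E_A ⊗ Id` for a
CPTP map `E_A` (with Kraus operators `M k`), then `E_A` fixes every element of the
operator Schmidt span `Σ_A(ρ)`, and `E_A ⊗ Id` fixes every element of `Σ_A(ρ) ⊗ M_{d_B}`. -/
theorem invariance_of_operator_schmidt_span {dA dB m : ℕ}
    (ρ : Matrix (Fin dA × Fin dB) (Fin dA × Fin dB) ℂ)
    (hρ : ρ.PosSemidef) (hρtr : ρ.trace = 1)
    (EA : Matrix (Fin dA) (Fin dA) ℂ → Matrix (Fin dA) (Fin dA) ℂ)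
    (M : Fin m → Matrix (Fin dA) (Fin dA) ℂ)
    (hKraus : ∀ X, EA X = ∑ k, M k * X * (M k)ᴴ)
    (hTP : ∑ k, (M k)ᴴ * M k = 1)
    (hinv : (∑ k, (M k ⊗ₖ (1 : Matrix (Fin dB) (Fin dB) ℂ)) * ρ *
        (M k ⊗ₖ (1 : Matrix (Fin dB) (Fin dB) ℂ))ᴴ) = ρ) :
    (∀ X ∈ opSchmidtSpan ρ, EA X = X) ∧
    (∀ Z ∈ tensorExt (dB := dB) (opSchmidtSpan ρ),
      (∑ k, (M k ⊗ₖ (1 : Matrix (Fin dB) (Fin dB) ℂ)) * Z *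
        (M k ⊗ₖ (1 : Matrix (Fin dB) (Fin dB) ℂ))ᴴ) = Z) :=
  invariance_of_operator_schmidt_span_general ρ EA M hKraus hinv
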